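/- Let O be a Hermitian operator on H with ‖O‖_∞ ≤ o, let σ, σ′ be states on H^{⊗m} with D(σ,σ′) ≤ ε, and let Ō = (1/m) Σ_{j=1}^m O_j be the averaged observable. Define Δ²_{σ₀,σ} Ō = Tr[(Ō − Tr[Ōσ₀]·I)² σ]. Then |Δ²_{σ,σ} Ō − Δ²_{σ,σ′} Ō| ≤ 4o²(2ε + ε²). -/

import Mathlib

open Matrix
open scoped ComplexOrder Kronecker

/-- Schatten 1-norm (trace norm) of a complex matrix: sum of its singular values. -/
noncomputable def traceNorm {ι : Type*} [Fintype ι] [DecidableEq ι]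
    (M : Matrix ι ι ℂ) : ℝ :=
  ∑ i, Real.sqrt ((Matrix.posSemidef_conjTranspose_mul_self M).1.eigenvalues i)

/-- Trace distance `D(A,B) = ‖A - B‖₁ / 2`. -/
noncomputable def traceDist {ι : Type*} [Fintype ι] [DecidableEq ι]
    (A B : Matrix ι ι ℂ) : ℝ :=
  traceNorm (A - B) / 2

/-- A quantum state: a positive semidefinite matrix of trace one. -/
def IsState {ι : Type*} [Fintype ι] [DecidableEq ι] (ρ : Matrix ι ι ℂ) : Prop :=
  ρ.PosSemidef ∧ ρ.trace = 1

/-- Operator norm (largest singular value) of a complex matrix. -/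
noncomputable def opNorm {ι : Type*} [Fintype ι] [DecidableEq ι]
    (M : Matrix ι ι ℂ) : ℝ :=
  ⨆ i, Real.sqrt ((Matrix.posSemidef_conjTranspose_mul_self M).1.eigenvalues i)

/-- The single-site observable `O_j` acting on the `j`-th tensor factor of `H^{⊗ m}`. -/
def embedAt {d m : ℕ} (j : Fin m) (O : Matrix (Fin d) (Fin d) ℂ) :
    Matrix (Fin m → Fin d) (Fin m → Fin d) ℂ :=
  fun x y => O (x j) (y j) * ∏ i ∈ Finset.univ.erase j, (if x i = y i then 1 else 0)

/-- The averaged observable `Ō = (1/m) Σ_j O_j`. -/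
noncomputable def avgObs {d m : ℕ} (O : Matrix (Fin d) (Fin d) ℂ) :
    Matrix (Fin m → Fin d) (Fin m → Fin d) ℂ :=
  ((m : ℂ)⁻¹) • ∑ j, embedAt j O

/-- The (centered) second moment `Δ²_{σ₀,σ} Ō = Tr[(Ō − Tr[Ōσ₀]·I)² σ]`. -/
noncomputable def deltaSq {ι : Type*} [Fintype ι] [DecidableEq ι]
    (Obar σ₀ σ : Matrix ι ι ℂ) : ℂ :=
  (((Obar - (Obar * σ₀).trace • (1 : Matrix ι ι ℂ)) ^ 2) * σ).trace

/-! With `B = Ō − Tr[Ōσ]·I`, the difference of the two second moments is `Tr[B²(σ − σ′)]`, and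
the Hölder inequality `|Tr[AM]| ≤ ‖A‖_∞ ‖M‖₁` bounds it by `‖B‖² ‖σ − σ′‖₁ ≤ (2o)² · 2ε`.
Here `‖B‖ ≤ 2‖Ō‖` because `|Tr[Ōσ]| ≤ ‖Ō‖` for a state `σ` (Hölder again), and `‖Ō‖ ≤ ‖O‖`
because each `O_j` is the image of `O` under a unital ⋆-homomorphism of C⋆-algebras, which is
contractive. -/

open scoped Matrix.Norms.L2Operator

namespace Matrix

variable {n : Type*} [Fintype n] [DecidableEq n]

lemma norm_apply_le_l2_opNorm (X : Matrix n n ℂ) (i j : n) : ‖X i j‖ ≤ ‖X‖ :=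
  calc ‖X i j‖ = ‖(EuclideanSpace.equiv n ℂ).symm (X *ᵥ EuclideanSpace.single j 1) i‖ := by
        simp
    _ ≤ ‖(EuclideanSpace.equiv n ℂ).symm (X *ᵥ EuclideanSpace.single j 1)‖ :=
        PiLp.norm_apply_le _ i
    _ ≤ ‖X‖ * ‖EuclideanSpace.single j (1 : ℂ)‖ := X.l2_opNorm_mulVec _
    _ = ‖X‖ := by simp

lemma l2_opNorm_one_le : ‖(1 : Matrix n n ℂ)‖ ≤ 1 := by
  rw [← diagonal_one, l2_opNorm_diagonal]
  exact (pi_norm_const_le 1).trans norm_one.le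

lemma IsHermitian.trace_cfc {A : Matrix n n ℂ} (hA : A.IsHermitian) (f : ℝ → ℝ) :
    (cfc f A).trace = ∑ i, (f (hA.eigenvalues i) : ℂ) := by
  rw [hA.cfc_eq, IsHermitian.cfc, Unitary.conjStarAlgAut_apply, trace_mul_comm, ← mul_assoc,
    Unitary.coe_star_mul_self, one_mul, trace_diagonal]
  rfl

lemma IsHermitian.traceNorm_eq_sum_abs_eigenvalues {M : Matrix n n ℂ} (hM : M.IsHermitian) :
    traceNorm M = ∑ i, |hM.eigenvalues i| := by
  have hsa : IsSelfAdjoint M := hM.isSelfAdjoint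
  have hsqrt : cfc Real.sqrt (Mᴴ * M) = cfc (fun x : ℝ => |x|) M := by
    rw [hM.eq, ← sq, ← cfc_pow_id (R := ℝ) M 2, ← cfc_comp Real.sqrt (· ^ 2) M]
    simp only [Function.comp_def, Real.sqrt_sq_eq_abs]
  apply Complex.ofReal_injective
  rw [traceNorm, Complex.ofReal_sum, Complex.ofReal_sum,
    ← (posSemidef_conjTranspose_mul_self M).1.trace_cfc, hsqrt, hM.trace_cfc]

lemma norm_trace_mul_le (A : Matrix n n ℂ) {M : Matrix n n ℂ} (hM : M.IsHermitian) :
    ‖(A * M).trace‖ ≤ ‖A‖ * traceNorm M := by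
  let U := hM.eigenvectorUnitary
  have htrace :
      (A * M).trace = ∑ i, (star (U : Matrix n n ℂ) * A * U) i i * hM.eigenvalues i := by
    conv_lhs => rw [hM.spectral_theorem, Unitary.conjStarAlgAut_apply]
    rw [← mul_assoc, trace_mul_comm, ← mul_assoc, ← mul_assoc, trace]
    simp [U, mul_diagonal]
  have hconj : ‖star (U : Matrix n n ℂ) * A * U‖ = ‖A‖ := by
    rw [CStarRing.norm_mul_coe_unitary, ← Unitary.coe_star, CStarRing.norm_coe_unitary_mul]
  rw [htrace, hM.traceNorm_eq_sum_abs_eigenvalues, Finset.mul_sum]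
  refine (norm_sum_le _ _).trans (Finset.sum_le_sum fun i _ => ?_)
  rw [norm_mul, Complex.norm_real, Real.norm_eq_abs, ← hconj]
  gcongr
  exact norm_apply_le_l2_opNorm _ i i

end Matrix

section

variable {n : Type*} [Fintype n] [DecidableEq n]

lemma traceNorm_nonneg (M : Matrix n n ℂ) : 0 ≤ traceNorm M :=
  Finset.sum_nonneg fun _ _ => Real.sqrt_nonneg _

lemma norm_le_opNorm (M : Matrix n n ℂ) : ‖M‖ ≤ opNorm M := by
  have hN := posSemidef_conjTranspose_mul_self M
  have hsing : ∀ i, Real.sqrt (hN.1.eigenvalues i) ≤ opNorm M := fun i =>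
    le_ciSup (f := fun i => Real.sqrt (hN.1.eigenvalues i)) (Set.finite_range _).bddAbove i
  have hopNorm : 0 ≤ opNorm M := Real.iSup_nonneg fun _ => Real.sqrt_nonneg _
  refine (mul_self_le_mul_self_iff (norm_nonneg M) hopNorm).mpr ?_
  -- `‖M‖² = ‖MᴴM‖`, and unitary conjugation does not change the norm of the diagonalised `MᴴM`
  rw [← l2_opNorm_conjTranspose_mul_self, hN.1.spectral_theorem, Unitary.conjStarAlgAut_apply,
    ← Unitary.coe_star, CStarRing.norm_mul_coe_unitary, CStarRing.norm_coe_unitary_mul,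
    l2_opNorm_diagonal]
  refine (pi_norm_le_iff_of_nonneg (by positivity)).mpr fun i => ?_
  rw [Function.comp_apply, RCLike.norm_ofReal, abs_of_nonneg (hN.eigenvalues_nonneg i),
    ← Real.mul_self_sqrt (hN.eigenvalues_nonneg i)]
  exact mul_self_le_mul_self (Real.sqrt_nonneg _) (hsing i)

lemma IsState.traceNorm_eq_one {σ : Matrix n n ℂ} (hσ : IsState σ) : traceNorm σ = 1 := by
  rw [hσ.1.1.traceNorm_eq_sum_abs_eigenvalues]
  apply Complex.ofReal_injective
  simp only [Complex.ofReal_sum, abs_of_nonneg (hσ.1.eigenvalues_nonneg _), Complex.ofReal_one]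
  exact hσ.1.1.trace_eq_sum_eigenvalues.symm.trans hσ.2

lemma norm_deltaSq_sub_le (X : Matrix n n ℂ) {σ σ' : Matrix n n ℂ} (hσ : IsState σ)
    (hσ' : σ'.IsHermitian) :
    ‖deltaSq X σ σ - deltaSq X σ σ'‖ ≤ 4 * ‖X‖ ^ 2 * traceNorm (σ - σ') := by
  set B := X - (X * σ).trace • (1 : Matrix n n ℂ)
  have hmean : ‖(X * σ).trace‖ ≤ ‖X‖ := by
    simpa [hσ.traceNorm_eq_one] using norm_trace_mul_le X hσ.1.1
  have hB : ‖B‖ ≤ 2 * ‖X‖ :=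
    calc ‖B‖ ≤ ‖X‖ + ‖(X * σ).trace‖ * ‖(1 : Matrix n n ℂ)‖ :=
          (norm_sub_le _ _).trans (add_le_add le_rfl (norm_smul_le _ _))
      _ ≤ ‖X‖ + ‖X‖ * 1 := by gcongr; exact l2_opNorm_one_le
      _ = 2 * ‖X‖ := by ring
  have hnonneg := traceNorm_nonneg (σ - σ')
  calc ‖deltaSq X σ σ - deltaSq X σ σ'‖ = ‖(B ^ 2 * (σ - σ')).trace‖ := by
        rw [deltaSq, deltaSq, mul_sub, trace_sub]
    _ ≤ ‖B ^ 2‖ * traceNorm (σ - σ') := norm_trace_mul_le _ (hσ.1.1.sub hσ')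
    _ ≤ ‖B‖ ^ 2 * traceNorm (σ - σ') := by gcongr; exact norm_pow_le' B two_pos
    _ ≤ (2 * ‖X‖) ^ 2 * traceNorm (σ - σ') := by gcongr
    _ = 4 * ‖X‖ ^ 2 * traceNorm (σ - σ') := by ring

end

section

variable {d m : ℕ}

lemma embedAt_eq_submatrix (j : Fin m) (A : Matrix (Fin d) (Fin d) ℂ) :
    embedAt j A =
      (A ⊗ₖ (1 : Matrix ({i // i ≠ j} → Fin d) ({i // i ≠ j} → Fin d) ℂ)).submatrix
        (Equiv.piSplitAt j _) (Equiv.piSplitAt j _) := by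
  ext x y
  simp only [embedAt, submatrix_apply, kroneckerMap_apply, Equiv.piSplitAt_apply, one_apply,
    Finset.prod_boole, funext_iff]
  simp [Finset.mem_erase, and_comm]

noncomputable def embedAtStarAlgHom (j : Fin m) :
    Matrix (Fin d) (Fin d) ℂ →⋆ₐ[ℂ] Matrix (Fin m → Fin d) (Fin m → Fin d) ℂ where
  toFun := embedAt j
  map_one' := by rw [embedAt_eq_submatrix, one_kronecker_one, submatrix_one_equiv]
  map_mul' A B := by
    simp only [embedAt_eq_submatrix, submatrix_mul_equiv, ← mul_kronecker_mul, mul_one]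
  map_zero' := by ext; simp [embedAt]
  map_add' A B := by ext; simp [embedAt, add_mul]
  commutes' c := by
    rw [Algebra.algebraMap_eq_smul_one, Algebra.algebraMap_eq_smul_one, embedAt_eq_submatrix,
      smul_kronecker, one_kronecker_one]
    exact congrArg (c • · : Matrix (Fin m → Fin d) _ ℂ → _) (submatrix_one_equiv _)
  map_star' A := by
    simp only [embedAt_eq_submatrix, star_eq_conjTranspose, conjTranspose_submatrix,
      conjTranspose_kronecker, conjTranspose_one]

lemma norm_embedAt_le (j : Fin m) (A : Matrix (Fin d) (Fin d) ℂ) :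
    ‖embedAt j A‖ ≤ ‖A‖ :=
  NonUnitalStarAlgHom.norm_apply_le (embedAtStarAlgHom j) A

lemma norm_avgObs_le (O : Matrix (Fin d) (Fin d) ℂ) :
    ‖(avgObs O : Matrix (Fin m → Fin d) (Fin m → Fin d) ℂ)‖ ≤ ‖O‖ := by
  rcases m.eq_zero_or_pos with rfl | hm
  · simp [avgObs]
  rw [avgObs, norm_smul, norm_inv, Complex.norm_natCast, inv_mul_le_iff₀ (by positivity)]
  calc ‖∑ j : Fin m, embedAt j O‖ ≤ ∑ j : Fin m, ‖embedAt j O‖ := norm_sum_le _ _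
    _ ≤ ∑ _j : Fin m, ‖O‖ := Finset.sum_le_sum fun j _ => norm_embedAt_le j O
    _ = m * ‖O‖ := by simp

end

theorem avg_observable_variance_bound_general {d m : ℕ}
    (O : Matrix (Fin d) (Fin d) ℂ)
    (o ε : ℝ) (ho : opNorm O ≤ o)
    (σ σ' : Matrix (Fin m → Fin d) (Fin m → Fin d) ℂ)
    (hσ : IsState σ) (hσ' : IsState σ')
    (hdist : traceDist σ σ' ≤ ε) :
    ‖deltaSq (avgObs O) σ σ - deltaSq (avgObs O) σ σ'‖ ≤
      4 * o ^ 2 * (2 * ε + ε ^ 2) := by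
  set Obar : Matrix (Fin m → Fin d) (Fin m → Fin d) ℂ := avgObs O
  have hObar : ‖Obar‖ ≤ o := (norm_avgObs_le O).trans ((norm_le_opNorm O).trans ho)
  have htraceNorm : traceNorm (σ - σ') ≤ 2 * ε := by rw [traceDist] at hdist; linarith
  have hnonneg := traceNorm_nonneg (σ - σ')
  calc _ ≤ 4 * ‖Obar‖ ^ 2 * traceNorm (σ - σ') := norm_deltaSq_sub_le _ hσ hσ'.1.1
    _ ≤ 4 * o ^ 2 * (2 * ε) := by gcongr
    _ ≤ 4 * o ^ 2 * (2 * ε + ε ^ 2) := by gcongr; exact le_add_of_nonneg_right (sq_nonneg ε)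

/-- Variance deviation bound under trace-distance tampering:
`|Δ²_{σ,σ} Ō − Δ²_{σ,σ'} Ō| ≤ 4o²(2ε + ε²)`. -/
theorem avg_observable_variance_bound {d m : ℕ}
    (O : Matrix (Fin d) (Fin d) ℂ) (hO : O.IsHermitian)
    (o ε : ℝ) (ho : opNorm O ≤ o)
    (σ σ' : Matrix (Fin m → Fin d) (Fin m → Fin d) ℂ)
    (hσ : IsState σ) (hσ' : IsState σ')
    (hdist : traceDist σ σ' ≤ ε) :
    ‖deltaSq (avgObs O) σ σ - deltaSq (avgObs O) σ σ'‖ ≤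
      4 * o ^ 2 * (2 * ε + ε ^ 2) :=
  avg_observable_variance_bound_general O o ε ho σ σ' hσ hσ' hdist
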